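/- Let x ∈ ℝⁿ \ F for a nonempty closed set F ⊆ ℝⁿ, and let ℓ ∈ ℤ be the unique integer with √n·2^ℓ < dist(x, F) ≤ √n·2^{ℓ+1}. Then the dyadic cube Q of side length 2^{ℓ−1} containing x satisfies √n·L_Q ≤ dist(Q, F) ≤ 4√n·L_Q. -/

import Mathlib

open Set Metric

/-- The dyadic cube `2^ℓ m + 2^ℓ [0,1)ⁿ` in Euclidean space `ℝⁿ`. -/
def dyadicCubeE (n : ℕ) (ℓ : ℤ) (m : Fin n → ℤ) : Set (EuclideanSpace ℝ (Fin n)) :=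
  {x | ∀ i, (2 : ℝ) ^ ℓ * m i ≤ x i ∧ x i < (2 : ℝ) ^ ℓ * (m i + 1)}

/-- Distance between two sets: `inf {dist x y : x ∈ A, y ∈ B}`. -/
noncomputable def setDist {α : Type*} [MetricSpace α] (A B : Set α) : ℝ :=
  sInf {d : ℝ | ∃ x ∈ A, ∃ y ∈ B, d = dist x y}

/-!
With `L = 2^(ℓ-1)`, every point of `Q` lies within `diam Q ≤ √n·L` of `x`, so the triangle
inequality gives `dist(Q, F) ≥ dist(x, F) - √n·L > 2√n·L - √n·L`; conversely
`dist(Q, F) ≤ dist(x, F) ≤ √n·2^(ℓ+1) = 4√n·L`.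
-/

theorem EuclideanSpace.dist_le_sqrt_card_mul {ι : Type*} [Fintype ι]
    {x y : EuclideanSpace ℝ ι} {r : ℝ} (h : ∀ i, |x i - y i| ≤ r) :
    dist x y ≤ √(Fintype.card ι) * r := by
  cases isEmpty_or_nonempty ι
  · simp [Subsingleton.elim x y]
  have hr : 0 ≤ r := (abs_nonneg _).trans (h (Classical.arbitrary ι))
  calc dist x y = √(∑ i, dist (x i) (y i) ^ 2) := EuclideanSpace.dist_eq x y
    _ ≤ √(∑ _i : ι, r ^ 2) := by
      gcongr with i
      exact (Real.dist_eq _ _).trans_le (h i)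
    _ = √(Fintype.card ι) * r := by
      rw [Finset.sum_const, Finset.card_univ, nsmul_eq_mul, Real.sqrt_mul (by positivity),
        Real.sqrt_sq hr]

lemma abs_sub_le_of_mem_dyadicCubeE {n : ℕ} {k : ℤ} {m : Fin n → ℤ}
    {y z : EuclideanSpace ℝ (Fin n)} (hy : y ∈ dyadicCubeE n k m) (hz : z ∈ dyadicCubeE n k m)
    (i : Fin n) : |y i - z i| ≤ 2 ^ k := by
  obtain ⟨hy₁, hy₂⟩ := hy i
  obtain ⟨hz₁, hz₂⟩ := hz i
  rw [abs_le]
  constructor <;> linarith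

lemma dist_le_of_mem_dyadicCubeE {n : ℕ} {k : ℤ} {m : Fin n → ℤ}
    {y z : EuclideanSpace ℝ (Fin n)} (hy : y ∈ dyadicCubeE n k m) (hz : z ∈ dyadicCubeE n k m) :
    dist y z ≤ √n * 2 ^ k := by
  simpa using EuclideanSpace.dist_le_sqrt_card_mul (abs_sub_le_of_mem_dyadicCubeE hy hz)

section setDist

variable {α : Type*} [MetricSpace α] {A B : Set α}

lemma setDist_le_dist {a b : α} (ha : a ∈ A) (hb : b ∈ B) : setDist A B ≤ dist a b :=
  csInf_le ⟨0, by rintro d ⟨a, -, b, -, rfl⟩; exact dist_nonneg⟩ ⟨a, ha, b, hb, rfl⟩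

lemma setDist_le_infDist {a : α} (ha : a ∈ A) (hB : B.Nonempty) : setDist A B ≤ infDist a B :=
  (le_infDist hB).2 fun _ hb ↦ setDist_le_dist ha hb

lemma infDist_sub_le_setDist {x : α} {d : ℝ} (hx : x ∈ A) (hB : B.Nonempty)
    (hA : ∀ a ∈ A, dist x a ≤ d) : infDist x B - d ≤ setDist A B := by
  obtain ⟨b₀, hb₀⟩ := hB
  refine le_csInf ⟨dist x b₀, x, hx, b₀, hb₀, rfl⟩ ?_
  rintro _ ⟨a, ha, b, hb, rfl⟩
  linarith [infDist_le_dist_of_mem (x := x) hb, dist_triangle x a b, hA a ha]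

end setDist

theorem whitney_key_step_general (n : ℕ) (F : Set (EuclideanSpace ℝ (Fin n)))
    (hF : F.Nonempty)
    (x : EuclideanSpace ℝ (Fin n)) (ℓ : ℤ)
    (h1 : Real.sqrt n * (2 : ℝ) ^ ℓ < infDist x F)
    (h2 : infDist x F ≤ Real.sqrt n * (2 : ℝ) ^ (ℓ + 1))
    (m : Fin n → ℤ) (hxQ : x ∈ dyadicCubeE n (ℓ - 1) m) :
    Real.sqrt n * (2 : ℝ) ^ (ℓ - 1) ≤ setDist (dyadicCubeE n (ℓ - 1) m) F ∧
    setDist (dyadicCubeE n (ℓ - 1) m) F ≤ 4 * Real.sqrt n * (2 : ℝ) ^ (ℓ - 1) := by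
  have hpow : (2 : ℝ) ^ ℓ = 2 * 2 ^ (ℓ - 1) := by
    rw [← zpow_one_add₀ two_ne_zero]; ring_nf
  have hpow_succ : (2 : ℝ) ^ (ℓ + 1) = 4 * 2 ^ (ℓ - 1) := by
    rw [show (4 : ℝ) = 2 ^ (2 : ℤ) by norm_num, ← zpow_add₀ two_ne_zero]; ring_nf
  rw [hpow] at h1
  rw [hpow_succ] at h2
  have hlower := infDist_sub_le_setDist hxQ hF fun _ ha ↦ dist_le_of_mem_dyadicCubeE hxQ ha
  have hupper := setDist_le_infDist hxQ hF
  constructor <;> linarith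

theorem whitney_key_step (n : ℕ) (F : Set (EuclideanSpace ℝ (Fin n)))
    (hF : F.Nonempty) (hFc : IsClosed F)
    (x : EuclideanSpace ℝ (Fin n)) (hx : x ∉ F) (ℓ : ℤ)
    (h1 : Real.sqrt n * (2 : ℝ) ^ ℓ < infDist x F)
    (h2 : infDist x F ≤ Real.sqrt n * (2 : ℝ) ^ (ℓ + 1))
    (m : Fin n → ℤ) (hxQ : x ∈ dyadicCubeE n (ℓ - 1) m) :
    Real.sqrt n * (2 : ℝ) ^ (ℓ - 1) ≤ setDist (dyadicCubeE n (ℓ - 1) m) F ∧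
    setDist (dyadicCubeE n (ℓ - 1) m) F ≤ 4 * Real.sqrt n * (2 : ℝ) ^ (ℓ - 1) :=
  whitney_key_step_general n F hF x ℓ h1 h2 m hxQ
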